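/- Minimal hitting set duality, second direction: a set Y ⊆ F is a CXp for the prediction c = κ(v) if and only if Y is a minimal hitting set of the set 𝔸 of all AXp's for c = κ(v). -/
import Mathlib


/-- `X` is a weak abductive explanation (weak AXp) for the prediction `κ v`:
fixing the features in `X` to their values in `v` forces the prediction `κ v`. -/
def WeakAXp {m : ℕ} {K : Type*} {D : Fin m → Type*}
    (κ : (∀ i, D i) → K) (v : ∀ i, D i) (X : Finset (Fin m)) : Prop :=
  ∀ x : ∀ i, D i, (∀ i ∈ X, x i = v i) → κ x = κ v

/-- `Y` is a weak contrastive explanation (weak CXp) for the prediction `κ v`: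
some point agreeing with `v` outside `Y` gets a different prediction. -/
def WeakCXp {m : ℕ} {K : Type*} {D : Fin m → Type*}
    (κ : (∀ i, D i) → K) (v : ∀ i, D i) (Y : Finset (Fin m)) : Prop :=
  ∃ x : ∀ i, D i, (∀ i ∉ Y, x i = v i) ∧ κ x ≠ κ v

/-- An AXp is a subset-minimal weak AXp. -/
def AXp {m : ℕ} {K : Type*} {D : Fin m → Type*}
    (κ : (∀ i, D i) → K) (v : ∀ i, D i) (X : Finset (Fin m)) : Prop :=
  WeakAXp κ v X ∧ ∀ X' ⊂ X, ¬ WeakAXp κ v X'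

/-- A CXp is a subset-minimal weak CXp. -/
def CXp {m : ℕ} {K : Type*} {D : Fin m → Type*}
    (κ : (∀ i, D i) → K) (v : ∀ i, D i) (Y : Finset (Fin m)) : Prop :=
  WeakCXp κ v Y ∧ ∀ Y' ⊂ Y, ¬ WeakCXp κ v Y'

/-- `H` is a hitting set of the family `S`: it intersects every member of `S`. -/
def HittingSet {m : ℕ} (H : Finset (Fin m)) (S : Set (Finset (Fin m))) : Prop :=
  ∀ S' ∈ S, (H ∩ S').Nonempty

/-- `H` is a minimal hitting set of `S`: a hitting set no proper subset of
which is a hitting set. -/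
def MinimalHittingSet {m : ℕ} (H : Finset (Fin m)) (S : Set (Finset (Fin m))) : Prop :=
  HittingSet H S ∧ ∀ H' ⊂ H, ¬ HittingSet H' S


lemma weakAXp_mono {m : ℕ} {K : Type*} {D : Fin m → Type*}
    (κ : (∀ i, D i) → K) (v : ∀ i, D i) {X X' : Finset (Fin m)}
    (hs : X ⊆ X') (h : WeakAXp κ v X) : WeakAXp κ v X' :=
  fun x hx => h x fun i hi => hx i (hs hi)

lemma exists_AXp_subset {m : ℕ} {K : Type*} {D : Fin m → Type*}
    (κ : (∀ i, D i) → K) (v : ∀ i, D i) (X : Finset (Fin m)) :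
    WeakAXp κ v X → ∃ X' ⊆ X, AXp κ v X' := by
  induction X using Finset.strongInduction with
  | _ X ih =>
    intro h
    by_cases hall : ∀ X' ⊂ X, ¬ WeakAXp κ v X'
    · exact ⟨X, Finset.Subset.refl X, h, hall⟩
    · push_neg at hall
      obtain ⟨X', hsub, hX'⟩ := hall
      obtain ⟨X'', h1, h2⟩ := ih X' hsub hX'
      exact ⟨X'', h1.trans hsub.subset, h2⟩

lemma weakCXp_iff_hitting {m : ℕ} {K : Type*} {D : Fin m → Type*}
    (κ : (∀ i, D i) → K) (v : ∀ i, D i) (Y : Finset (Fin m)) :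
    WeakCXp κ v Y ↔ HittingSet Y {X : Finset (Fin m) | AXp κ v X} := by
  constructor
  · rintro ⟨x, hx, hne⟩ X hX
    rw [Finset.Nonempty, Set.mem_setOf_eq] at *; simp only [Finset.mem_inter]
    by_contra hcon
    push_neg at hcon
    exact hne (hX.1 x fun i hi => hx i fun hiY => hcon i hiY hi)
  · intro hhit
    by_contra hcon
    have hwa : WeakAXp κ v Yᶜ := by
      intro x hx
      by_contra hne
      exact hcon ⟨x, fun i hi => hx i (Finset.mem_compl.mpr hi), hne⟩
    obtain ⟨X, hsub, hX⟩ := exists_AXp_subset κ v Yᶜ hwa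
    obtain ⟨i, hi⟩ := hhit X hX
    rw [Finset.mem_inter] at hi
    exact Finset.mem_compl.mp (hsub hi.2) hi.1

/-- Minimal hitting set duality, second direction: `Y` is a CXp iff it is a
minimal hitting set of the set 𝔸 of all AXp's. -/
theorem CXp_iff_minimalHittingSet_AXps {m : ℕ} {K : Type*} {D : Fin m → Type*}
    [∀ i, Nonempty (D i)]
    (κ : (∀ i, D i) → K) (v : ∀ i, D i) (Y : Finset (Fin m)) :
    CXp κ v Y ↔ MinimalHittingSet Y {X : Finset (Fin m) | AXp κ v X} := by
  unfold CXp MinimalHittingSet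
  simp only [weakCXp_iff_hitting]
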